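/- arXiv:1610.05249 — 2 statements merged into one kernel-verified Lean document; each statement's English description precedes it below -/
import Mathlib

section
/- Let h : ℝ → ℝ be continuous with H(t) = ∫₀ᵗ h(r) dr, and suppose there is θ > 2 such that 0 < θ H(t) ≤ h(t) t for all t ≠ 0. Then there exists c > 0 such that H(t) ≥ c·|t|^θ for all |t| ≥ 1. -/
/-!
The Ambrosetti–Rabinowitz inequality `θ H(t) ≤ h(t) t` says exactly that `t ↦ H(t) t^(-θ)` is
nondecreasing on `(0, ∞)`, so `H(t) ≥ H(1) t^θ` for `t ≥ 1`. Applied to `t ↦ H(-t)` this gives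
`H(-t) ≥ H(-1) t^θ`, and `θ > 0` makes `H(±1)` positive, so `c = min (H 1) (H (-1))` works.
-/

open Real Set

theorem monotoneOn_mul_rpow_neg {H g : ℝ → ℝ} {θ : ℝ}
    (hd : ∀ t > 0, HasDerivAt H (g t) t) (hAR : ∀ t > 0, θ * H t ≤ g t * t) :
    MonotoneOn (fun t => H t * t ^ (-θ)) (Ioi 0) := by
  have hF : ∀ t > 0, HasDerivAt (fun t => H t * t ^ (-θ))
      (t ^ (-θ - 1) * (g t * t - θ * H t)) t := by
    intro t ht
    refine ((hd t ht).mul (hasDerivAt_rpow_const (p := -θ) (Or.inl ht.ne'))).congr_deriv ?_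
    rw [show -θ = -θ - 1 + 1 by ring, rpow_add_one ht.ne', sub_add_cancel]
    ring
  refine monotoneOn_of_deriv_nonneg (convex_Ioi 0)
    (fun t ht => (hF t ht).continuousAt.continuousWithinAt)
    (fun t ht => (hF t (interior_subset ht)).differentiableAt.differentiableWithinAt)
    fun t ht => ?_
  rw [interior_Ioi] at ht
  rw [(hF t ht).deriv]
  exact mul_nonneg (rpow_nonneg ht.le _) (sub_nonneg.2 (hAR t ht))

theorem mul_rpow_le_of_hasDerivAt {H g : ℝ → ℝ} {θ : ℝ}
    (hd : ∀ t > 0, HasDerivAt H (g t) t) (hAR : ∀ t > 0, θ * H t ≤ g t * t)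
    {t : ℝ} (ht : 1 ≤ t) : H 1 * t ^ θ ≤ H t := by
  have ht0 : 0 < t := one_pos.trans_le ht
  have hmono := monotoneOn_mul_rpow_neg hd hAR (mem_Ioi.2 one_pos) ht0 ht
  simp only [one_rpow, mul_one] at hmono
  calc H 1 * t ^ θ ≤ H t * t ^ (-θ) * t ^ θ := by gcongr
    _ = H t := by rw [mul_assoc, ← rpow_add ht0, neg_add_cancel, rpow_zero, mul_one]

theorem stmt_2 (h : ℝ → ℝ) (H : ℝ → ℝ) (θ : ℝ)
    (hc : Continuous h)
    (hH : ∀ t : ℝ, H t = ∫ r in (0 : ℝ)..t, h r)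
    (hθ : 2 < θ)
    (hAR : ∀ t : ℝ, t ≠ 0 → 0 < θ * H t ∧ θ * H t ≤ h t * t) :
    ∃ c : ℝ, 0 < c ∧ ∀ t : ℝ, 1 ≤ |t| → c * |t| ^ θ ≤ H t := by
  have hd : ∀ t, HasDerivAt H (h t) t := fun t => by
    rw [funext hH]; exact (hc.integral_hasStrictDerivAt 0 t).hasDerivAt
  have hθ0 : 0 < θ := two_pos.trans hθ
  have hpos : ∀ t, 1 ≤ t → H 1 * t ^ θ ≤ H t :=
    fun t => mul_rpow_le_of_hasDerivAt (fun t _ => hd t) fun t ht => (hAR t ht.ne').2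
  have hneg : ∀ t, 1 ≤ t → H (-1) * t ^ θ ≤ H (-t) :=
    fun t => mul_rpow_le_of_hasDerivAt (H := fun u => H (-u)) (g := fun u => -h (-u))
      (fun t _ => by simpa [Function.comp_def] using (hd (-t)).comp t (hasDerivAt_neg t))
      fun t ht => by simpa [neg_mul_neg] using (hAR (-t) (neg_ne_zero.2 ht.ne')).2
  have hH1 : 0 < H 1 := pos_of_mul_pos_right (hAR 1 one_ne_zero).1 hθ0.le
  have hHm1 : 0 < H (-1) := pos_of_mul_pos_right (hAR (-1) (by norm_num)).1 hθ0.le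
  refine ⟨min (H 1) (H (-1)), lt_min hH1 hHm1, fun t ht => ?_⟩
  rcases abs_choice t with habs | habs
  · calc min (H 1) (H (-1)) * |t| ^ θ ≤ H 1 * |t| ^ θ := by gcongr; exact min_le_left _ _
      _ ≤ H |t| := hpos |t| ht
      _ = H t := by rw [habs]
  · calc min (H 1) (H (-1)) * |t| ^ θ ≤ H (-1) * |t| ^ θ := by gcongr; exact min_le_right _ _
      _ ≤ H (-|t|) := hneg |t| ht
      _ = H t := by rw [habs, neg_neg]
end

section
/- Let h : ℝ → ℝ be odd, continuously differentiable, with t ↦ h(t)/|t| nondecreasing on ℝ∖{0}, and H(t) = ∫₀ᵗ h(r) dr. Then f(s) = h(s)·s − 2·H(s) is nonincreasing on (−∞, 0) and nondecreasing on (0, ∞); in particular f(s) ≥ f(0) = 0 for all s. -/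
theorem stmt_5 (h : ℝ → ℝ) (H : ℝ → ℝ)
    (hodd : ∀ t : ℝ, h (-t) = -h t)
    (hreg : ContDiff ℝ 1 h)
    (hmono : MonotoneOn (fun t : ℝ => h t / |t|) {t : ℝ | t ≠ 0})
    (hH : ∀ t : ℝ, H t = ∫ r in (0 : ℝ)..t, h r) :
    AntitoneOn (fun s : ℝ => h s * s - 2 * H s) (Set.Iio (0 : ℝ)) ∧
    MonotoneOn (fun s : ℝ => h s * s - 2 * H s) (Set.Ioi (0 : ℝ)) ∧
    h 0 * 0 - 2 * H 0 = 0 ∧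
    ∀ s : ℝ, 0 ≤ h s * s - 2 * H s := by
  have hc : Continuous h := hreg.continuous
  have h0 : h 0 = 0 := by have := hodd 0; simp at this; linarith
  -- H is even
  have hHeven : ∀ s : ℝ, H (-s) = H s := by
    intro s
    have e : (∫ x in (0:ℝ)..s, h (-x)) = ∫ x in -s..(0:ℝ), h x := by
      simpa using intervalIntegral.integral_comp_neg (a := (0:ℝ)) (b := s) h
    rw [hH, hH, intervalIntegral.integral_symm, ← e]
    simp [hodd]
  -- pointwise bound: for 0 ≤ r ≤ b, 0 < b, h r ≤ r * (h b / b)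
  have hpt : ∀ b : ℝ, 0 < b → ∀ r ∈ Set.Icc (0:ℝ) b, h r ≤ r * (h b / b) := by
    intro b hb r hr
    rcases eq_or_lt_of_le hr.1 with heq | hrpos
    · simp [← heq, h0]
    · have key := hmono (show r ∈ {t : ℝ | t ≠ 0} from ne_of_gt hrpos)
        (show b ∈ {t : ℝ | t ≠ 0} from ne_of_gt hb) hr.2
      simp only [abs_of_pos hrpos, abs_of_pos hb] at key
      calc h r = (h r / r) * r := by field_simp
        _ ≤ (h b / b) * r := by
            exact mul_le_mul_of_nonneg_right key (le_of_lt hrpos)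
        _ = r * (h b / b) := mul_comm _ _
  -- integral comparison on [a,b] ⊆ [0,∞)
  have hint : ∀ a b : ℝ, 0 ≤ a → a ≤ b → 0 < b →
      (∫ r in a..b, h r) ≤ (b ^ 2 - a ^ 2) / 2 * (h b / b) := by
    intro a b ha hab hb
    have h1 : (∫ r in a..b, h r) ≤ ∫ r in a..b, r * (h b / b) := by
      apply intervalIntegral.integral_mono_on hab (hc.intervalIntegrable a b)
        ((continuous_id.mul continuous_const).intervalIntegrable a b)
      intro x hx
      exact hpt b hb x ⟨le_trans ha hx.1, hx.2⟩
    have h2 : (∫ r in a..b, r * (h b / b)) = (b ^ 2 - a ^ 2) / 2 * (h b / b) := by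
      rw [intervalIntegral.integral_mul_const, integral_id]
    linarith
  have hHdiff : ∀ a b : ℝ, H b - H a = ∫ r in a..b, h r := by
    intro a b
    rw [hH, hH, ← intervalIntegral.integral_interval_sub_left
      (hc.intervalIntegrable 0 b) (hc.intervalIntegrable 0 a)]
  -- monotone on positive reals (closed version, with 0 < a)
  have keypos : ∀ a b : ℝ, 0 < a → a ≤ b →
      h a * a - 2 * H a ≤ h b * b - 2 * H b := by
    intro a b ha hab
    have hb : 0 < b := lt_of_lt_of_le ha hab
    have hI := hint a b (le_of_lt ha) hab hb
    have hD := hHdiff a b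
    have hq := hmono (show a ∈ {t : ℝ | t ≠ 0} from ne_of_gt ha)
      (show b ∈ {t : ℝ | t ≠ 0} from ne_of_gt hb) hab
    simp only [abs_of_pos ha, abs_of_pos hb] at hq
    have e1 : h b = (h b / b) * b := by field_simp
    have e2 : h a = (h a / a) * a := by field_simp
    nlinarith [mul_le_mul_of_nonneg_right hq (sq_nonneg a), sq_nonneg a]
  -- nonnegativity for s > 0
  have nonnegpos : ∀ s : ℝ, 0 < s → 0 ≤ h s * s - 2 * H s := by
    intro s hs
    have hI := hint 0 s le_rfl (le_of_lt hs) hs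
    have hD : H s = ∫ r in (0:ℝ)..s, h r := hH s
    have e1 : h s = (h s / s) * s := by field_simp
    nlinarith [sq_nonneg s]
  have hzero : h 0 * 0 - 2 * H 0 = 0 := by
    rw [hH]; simp
  have feven : ∀ s : ℝ, h (-s) * (-s) - 2 * H (-s) = h s * s - 2 * H s := by
    intro s
    rw [hodd, hHeven]; ring
  refine ⟨?_, ?_, hzero, ?_⟩
  · intro a ha b hb hab
    simp only [Set.mem_Iio] at ha hb
    have := keypos (-b) (-a) (by linarith) (by linarith)
    rw [feven, feven] at this
    exact this
  · intro a ha b hb hab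
    exact keypos a b ha hab
  · intro s
    rcases lt_trichotomy s 0 with hs | hs | hs
    · have := nonnegpos (-s) (by linarith)
      rw [feven] at this
      exact this
    · rw [hs]; rw [hzero]
    · exact nonnegpos s hs
end
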